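/- Let m ≥ 1 and let sX, sY, t : Fin m → ℕ be positive with Σ_i t i = Σ_i sX i + Σ_i sY i. If the NMTS instance (sX, sY, t) has a solution (bijections α, β : Fin m ≃ Fin m with sX(α i) + sY(β i) = t i for all i), then the constructed two-machine open shop instance admits a feasible no-idle/no-wait schedule with makespan exactly L + 1, where L = 2m + 3mP + Σ_i t i and P = Σ_i t i + Σ_i sX i + Σ_i sY i. -/
import Mathlib


/-- M1 processing times of the constructed instance: x-jobs (`j < m`) and y-jobs
(`m ≤ j < 2m`) take time 1, the t-job of index `i` takes time `t i + 3P`. -/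
def osA (m : ℕ) (t : Fin m → ℕ) (P : ℕ) : Fin (3 * m) → ℕ := fun j =>
  if _ : (j : ℕ) < 2 * m then 1 else t ⟨(j : ℕ) - 2 * m, by omega⟩ + 3 * P

/-- M2 processing times of the constructed instance: the x-job of index `i` takes
time `sX i + P`, the y-job of index `i` takes `sY i + 2P`, t-jobs take time 2. -/
def osB (m : ℕ) (sX sY : Fin m → ℕ) (P : ℕ) : Fin (3 * m) → ℕ := fun j =>
  if h1 : (j : ℕ) < m then sX ⟨(j : ℕ), h1⟩ + P
  else if _ : (j : ℕ) < 2 * m then sY ⟨(j : ℕ) - m, by omega⟩ + 2 * P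
  else 2

/-- Start time of job `j` on a machine with processing times `c`, processing order
`π` and machine start time `s`: the machine works contiguously (no idle time). -/
def startTime (N : ℕ) (c : Fin N → ℕ) (π : Fin N ≃ Fin N) (s : ℕ) (j : Fin N) : ℕ :=
  s + ∑ l ∈ Finset.univ.filter (fun l : Fin N => l < π.symm j), c (π l)

/-- A no-idle/no-wait two-machine open shop schedule: each machine processes all jobs
contiguously in orders `π1`, `π2` from start times `s1`, `s2`, and for each job either
its M2 operation starts exactly when its M1 operation completes, or vice versa. -/
def OSSchedule (N : ℕ) (a b : Fin N → ℕ)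
    (π1 π2 : Fin N ≃ Fin N) (s1 s2 : ℕ) : Prop :=
  ∀ j : Fin N,
    startTime N b π2 s2 j = startTime N a π1 s1 j + a j ∨
    startTime N a π1 s1 j = startTime N b π2 s2 j + b j


namespace St17

/-- M1 order: positions `3i, 3i+1, 3i+2` hold jobs `x (α i)`, `t`-job `i`, `y (β i)`. -/
def f1 (m : ℕ) (α β : Fin m ≃ Fin m) : Fin (3*m) → Fin (3*m) := fun p =>
  if _ : (p : ℕ) % 3 = 0 then ⟨(α ⟨(p:ℕ)/3, by omega⟩ : Fin m), by omega⟩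
  else if _ : (p:ℕ) % 3 = 1 then ⟨2*m + (p:ℕ)/3, by omega⟩
  else ⟨m + (β ⟨(p:ℕ)/3, by omega⟩ : Fin m), by omega⟩

def g1 (m : ℕ) (α β : Fin m ≃ Fin m) : Fin (3*m) → Fin (3*m) := fun j =>
  if h : (j:ℕ) < m then ⟨3 * (α.symm ⟨(j:ℕ), h⟩ : Fin m), by omega⟩
  else if _ : (j:ℕ) < 2*m then ⟨3 * (β.symm ⟨(j:ℕ) - m, by omega⟩ : Fin m) + 2, by omega⟩
  else ⟨3 * ((j:ℕ) - 2*m) + 1, by omega⟩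

/-- M2 order: positions `3i, 3i+1, 3i+2` hold jobs `x (α i)`, `y (β i)`, `t`-job `i`. -/
def f2 (m : ℕ) (α β : Fin m ≃ Fin m) : Fin (3*m) → Fin (3*m) := fun p =>
  if _ : (p : ℕ) % 3 = 0 then ⟨(α ⟨(p:ℕ)/3, by omega⟩ : Fin m), by omega⟩
  else if _ : (p:ℕ) % 3 = 1 then ⟨m + (β ⟨(p:ℕ)/3, by omega⟩ : Fin m), by omega⟩
  else ⟨2*m + (p:ℕ)/3, by omega⟩

def g2 (m : ℕ) (α β : Fin m ≃ Fin m) : Fin (3*m) → Fin (3*m) := fun j =>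
  if h : (j:ℕ) < m then ⟨3 * (α.symm ⟨(j:ℕ), h⟩ : Fin m), by omega⟩
  else if _ : (j:ℕ) < 2*m then ⟨3 * (β.symm ⟨(j:ℕ) - m, by omega⟩ : Fin m) + 1, by omega⟩
  else ⟨3 * ((j:ℕ) - 2*m) + 2, by omega⟩

lemma left1 (m : ℕ) (α β : Fin m ≃ Fin m) : ∀ p, g1 m α β (f1 m α β p) = p := by
  intro p
  unfold f1 g1
  split_ifs with h1 h2 h3 h4 h5 h6 h7 h8
  all_goals (
    apply Fin.ext
    try simp only [Fin.val_mk, Nat.add_sub_cancel_left, Fin.eta, Equiv.symm_apply_apply] at h1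
    try simp only [Fin.val_mk, Nat.add_sub_cancel_left, Fin.eta, Equiv.symm_apply_apply] at h2
    try simp only [Fin.val_mk, Nat.add_sub_cancel_left, Fin.eta, Equiv.symm_apply_apply] at h3
    try simp only [Fin.val_mk, Nat.add_sub_cancel_left, Fin.eta, Equiv.symm_apply_apply] at h4
    try simp only [Fin.val_mk, Nat.add_sub_cancel_left, Fin.eta, Equiv.symm_apply_apply] at h5
    try simp only [Fin.val_mk, Nat.add_sub_cancel_left, Fin.eta, Equiv.symm_apply_apply] at h6
    try simp only [Fin.val_mk, Nat.add_sub_cancel_left, Fin.eta, Equiv.symm_apply_apply] at h7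
    try simp only [Fin.val_mk, Nat.add_sub_cancel_left, Fin.eta, Equiv.symm_apply_apply] at h8
    try simp only [Fin.val_mk, Nat.add_sub_cancel_left, Fin.eta, Equiv.symm_apply_apply]
    omega)

lemma left2 (m : ℕ) (α β : Fin m ≃ Fin m) : ∀ p, g2 m α β (f2 m α β p) = p := by
  intro p
  unfold f2 g2
  split_ifs with h1 h2 h3 h4 h5 h6 h7 h8
  all_goals (
    apply Fin.ext
    try simp only [Fin.val_mk, Nat.add_sub_cancel_left, Fin.eta, Equiv.symm_apply_apply] at h1
    try simp only [Fin.val_mk, Nat.add_sub_cancel_left, Fin.eta, Equiv.symm_apply_apply] at h2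
    try simp only [Fin.val_mk, Nat.add_sub_cancel_left, Fin.eta, Equiv.symm_apply_apply] at h3
    try simp only [Fin.val_mk, Nat.add_sub_cancel_left, Fin.eta, Equiv.symm_apply_apply] at h4
    try simp only [Fin.val_mk, Nat.add_sub_cancel_left, Fin.eta, Equiv.symm_apply_apply] at h5
    try simp only [Fin.val_mk, Nat.add_sub_cancel_left, Fin.eta, Equiv.symm_apply_apply] at h6
    try simp only [Fin.val_mk, Nat.add_sub_cancel_left, Fin.eta, Equiv.symm_apply_apply] at h7
    try simp only [Fin.val_mk, Nat.add_sub_cancel_left, Fin.eta, Equiv.symm_apply_apply] at h8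
    try simp only [Fin.val_mk, Nat.add_sub_cancel_left, Fin.eta, Equiv.symm_apply_apply]
    omega)

lemma rightInvAux {N : ℕ} (f g : Fin N → Fin N) (h : ∀ p, g (f p) = p) :
    ∀ j, f (g j) = j := by
  have hinj : Function.Injective f := fun a b hab => by rw [← h a, hab, h b]
  have hsurj : Function.Surjective f := Finite.surjective_of_injective hinj
  intro j
  obtain ⟨p, rfl⟩ := hsurj j
  rw [h]

def p1 (m : ℕ) (α β : Fin m ≃ Fin m) : Fin (3*m) ≃ Fin (3*m) :=
  ⟨f1 m α β, g1 m α β, left1 m α β, rightInvAux _ _ (left1 m α β)⟩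

def p2 (m : ℕ) (α β : Fin m ≃ Fin m) : Fin (3*m) ≃ Fin (3*m) :=
  ⟨f2 m α β, g2 m α β, left2 m α β, rightInvAux _ _ (left2 m α β)⟩

end St17

namespace St17

lemma osA_x (m : ℕ) (t : Fin m → ℕ) (P : ℕ) (j : Fin (3*m)) (h : (j:ℕ) < 2*m) :
    osA m t P j = 1 := by
  unfold osA; rw [dif_pos h]

lemma osA_t (m : ℕ) (t : Fin m → ℕ) (P : ℕ) (j : Fin (3*m)) (v : Fin m)
    (hv : (j:ℕ) = 2*m + (v:ℕ)) : osA m t P j = t v + 3*P := by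
  unfold osA
  rw [dif_neg (by omega)]
  simp only [hv, Nat.add_sub_cancel_left, Fin.eta]

lemma osB_x (m : ℕ) (sX sY : Fin m → ℕ) (P : ℕ) (j : Fin (3*m)) (v : Fin m)
    (hv : (j:ℕ) = (v:ℕ)) : osB m sX sY P j = sX v + P := by
  unfold osB
  rw [dif_pos (by omega)]
  simp only [hv, Fin.eta]

lemma osB_y (m : ℕ) (sX sY : Fin m → ℕ) (P : ℕ) (j : Fin (3*m)) (v : Fin m)
    (hv : (j:ℕ) = m + (v:ℕ)) : osB m sX sY P j = sY v + 2*P := by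
  unfold osB
  rw [dif_neg (by omega), dif_pos (by omega)]
  simp only [hv, Nat.add_sub_cancel_left, Fin.eta]

lemma osB_t (m : ℕ) (sX sY : Fin m → ℕ) (P : ℕ) (j : Fin (3*m))
    (h : 2*m ≤ (j:ℕ)) : osB m sX sY P j = 2 := by
  unfold osB
  rw [dif_neg (by omega), dif_neg (by omega)]

/-! values of the permutations at the three positions of block `k` -/

lemma p1v0 (m : ℕ) (α β : Fin m ≃ Fin m) (k : ℕ) (hk : k < m) (h : 3*k < 3*m) :
    ((p1 m α β ⟨3*k, h⟩ : Fin (3*m)) : ℕ) = (α ⟨k, hk⟩ : Fin m) := by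
  show ((f1 m α β ⟨3*k, h⟩ : Fin (3*m)) : ℕ) = _
  unfold f1
  rw [dif_pos (by simp only [Fin.val_mk]; omega : ((⟨3*k, h⟩ : Fin (3*m)) : ℕ) % 3 = 0)]
  simp only [Fin.val_mk, show 3*k/3 = k by omega]

lemma p1v1 (m : ℕ) (α β : Fin m ≃ Fin m) (k : ℕ) (hk : k < m) (h : 3*k+1 < 3*m) :
    ((p1 m α β ⟨3*k+1, h⟩ : Fin (3*m)) : ℕ) = 2*m + k := by
  show ((f1 m α β ⟨3*k+1, h⟩ : Fin (3*m)) : ℕ) = _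
  unfold f1
  rw [dif_neg (by simp only [Fin.val_mk]; omega : ¬ ((⟨3*k+1, h⟩ : Fin (3*m)) : ℕ) % 3 = 0),
    dif_pos (by simp only [Fin.val_mk]; omega : ((⟨3*k+1, h⟩ : Fin (3*m)) : ℕ) % 3 = 1)]
  simp only [Fin.val_mk, show (3*k+1)/3 = k by omega]

lemma p1v2 (m : ℕ) (α β : Fin m ≃ Fin m) (k : ℕ) (hk : k < m) (h : 3*k+2 < 3*m) :
    ((p1 m α β ⟨3*k+2, h⟩ : Fin (3*m)) : ℕ) = m + (β ⟨k, hk⟩ : Fin m) := by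
  show ((f1 m α β ⟨3*k+2, h⟩ : Fin (3*m)) : ℕ) = _
  unfold f1
  rw [dif_neg (by simp only [Fin.val_mk]; omega : ¬ ((⟨3*k+2, h⟩ : Fin (3*m)) : ℕ) % 3 = 0),
    dif_neg (by simp only [Fin.val_mk]; omega : ¬ ((⟨3*k+2, h⟩ : Fin (3*m)) : ℕ) % 3 = 1)]
  simp only [Fin.val_mk, show (3*k+2)/3 = k by omega]

lemma p2v0 (m : ℕ) (α β : Fin m ≃ Fin m) (k : ℕ) (hk : k < m) (h : 3*k < 3*m) :
    ((p2 m α β ⟨3*k, h⟩ : Fin (3*m)) : ℕ) = (α ⟨k, hk⟩ : Fin m) := by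
  show ((f2 m α β ⟨3*k, h⟩ : Fin (3*m)) : ℕ) = _
  unfold f2
  rw [dif_pos (by simp only [Fin.val_mk]; omega : ((⟨3*k, h⟩ : Fin (3*m)) : ℕ) % 3 = 0)]
  simp only [Fin.val_mk, show 3*k/3 = k by omega]

lemma p2v1 (m : ℕ) (α β : Fin m ≃ Fin m) (k : ℕ) (hk : k < m) (h : 3*k+1 < 3*m) :
    ((p2 m α β ⟨3*k+1, h⟩ : Fin (3*m)) : ℕ) = m + (β ⟨k, hk⟩ : Fin m) := by
  show ((f2 m α β ⟨3*k+1, h⟩ : Fin (3*m)) : ℕ) = _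
  unfold f2
  rw [dif_neg (by simp only [Fin.val_mk]; omega : ¬ ((⟨3*k+1, h⟩ : Fin (3*m)) : ℕ) % 3 = 0),
    dif_pos (by simp only [Fin.val_mk]; omega : ((⟨3*k+1, h⟩ : Fin (3*m)) : ℕ) % 3 = 1)]
  simp only [Fin.val_mk, show (3*k+1)/3 = k by omega]

lemma p2v2 (m : ℕ) (α β : Fin m ≃ Fin m) (k : ℕ) (hk : k < m) (h : 3*k+2 < 3*m) :
    ((p2 m α β ⟨3*k+2, h⟩ : Fin (3*m)) : ℕ) = 2*m + k := by
  show ((f2 m α β ⟨3*k+2, h⟩ : Fin (3*m)) : ℕ) = _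
  unfold f2
  rw [dif_neg (by simp only [Fin.val_mk]; omega : ¬ ((⟨3*k+2, h⟩ : Fin (3*m)) : ℕ) % 3 = 0),
    dif_neg (by simp only [Fin.val_mk]; omega : ¬ ((⟨3*k+2, h⟩ : Fin (3*m)) : ℕ) % 3 = 1)]
  simp only [Fin.val_mk, show (3*k+2)/3 = k by omega]

/-! positions of the jobs -/

lemma q1x (m : ℕ) (α β : Fin m ≃ Fin m) (j : Fin (3*m)) (h : (j:ℕ) < m) :
    (((p1 m α β).symm j : Fin (3*m)) : ℕ) = 3 * (α.symm ⟨(j:ℕ), h⟩ : Fin m) := by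
  show ((g1 m α β j : Fin (3*m)) : ℕ) = _
  unfold g1
  rw [dif_pos h]

lemma q1y (m : ℕ) (α β : Fin m ≃ Fin m) (j : Fin (3*m)) (h1 : ¬ (j:ℕ) < m)
    (h2 : (j:ℕ) < 2*m) (hjm : (j:ℕ) - m < m) :
    (((p1 m α β).symm j : Fin (3*m)) : ℕ) = 3 * (β.symm ⟨(j:ℕ) - m, hjm⟩ : Fin m) + 2 := by
  show ((g1 m α β j : Fin (3*m)) : ℕ) = _
  unfold g1
  rw [dif_neg h1, dif_pos h2]

lemma q1t (m : ℕ) (α β : Fin m ≃ Fin m) (j : Fin (3*m)) (h : ¬ (j:ℕ) < 2*m) :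
    (((p1 m α β).symm j : Fin (3*m)) : ℕ) = 3 * ((j:ℕ) - 2*m) + 1 := by
  show ((g1 m α β j : Fin (3*m)) : ℕ) = _
  unfold g1
  rw [dif_neg (by omega), dif_neg h]

lemma q2x (m : ℕ) (α β : Fin m ≃ Fin m) (j : Fin (3*m)) (h : (j:ℕ) < m) :
    (((p2 m α β).symm j : Fin (3*m)) : ℕ) = 3 * (α.symm ⟨(j:ℕ), h⟩ : Fin m) := by
  show ((g2 m α β j : Fin (3*m)) : ℕ) = _
  unfold g2
  rw [dif_pos h]

lemma q2y (m : ℕ) (α β : Fin m ≃ Fin m) (j : Fin (3*m)) (h1 : ¬ (j:ℕ) < m)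
    (h2 : (j:ℕ) < 2*m) (hjm : (j:ℕ) - m < m) :
    (((p2 m α β).symm j : Fin (3*m)) : ℕ) = 3 * (β.symm ⟨(j:ℕ) - m, hjm⟩ : Fin m) + 1 := by
  show ((g2 m α β j : Fin (3*m)) : ℕ) = _
  unfold g2
  rw [dif_neg h1, dif_pos h2]

lemma q2t (m : ℕ) (α β : Fin m ≃ Fin m) (j : Fin (3*m)) (h : ¬ (j:ℕ) < 2*m) :
    (((p2 m α β).symm j : Fin (3*m)) : ℕ) = 3 * ((j:ℕ) - 2*m) + 2 := by
  show ((g2 m α β j : Fin (3*m)) : ℕ) = _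
  unfold g2
  rw [dif_neg (by omega), dif_neg h]

end St17

namespace St17

def T (m : ℕ) (t : Fin m → ℕ) (P : ℕ) (i : ℕ) : ℕ :=
  ∑ k ∈ Finset.range i, ((if h : k < m then t ⟨k, h⟩ else 0) + 3*P + 2)

/-! processing times by position -/

lemma aae0 (m : ℕ) (t : Fin m → ℕ) (P : ℕ) (α β : Fin m ≃ Fin m) (n k : ℕ)
    (hk : k < m) (hn : n = 3*k) :
    (if h : n < 3*m then osA m t P (p1 m α β ⟨n, h⟩) else 0) = 1 := by
  subst hn
  rw [dif_pos (by omega : 3*k < 3*m)]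
  apply osA_x
  rw [p1v0 m α β k hk]
  omega

lemma aae1 (m : ℕ) (t : Fin m → ℕ) (P : ℕ) (α β : Fin m ≃ Fin m) (n k : ℕ)
    (hk : k < m) (hn : n = 3*k+1) :
    (if h : n < 3*m then osA m t P (p1 m α β ⟨n, h⟩) else 0) = t ⟨k, hk⟩ + 3*P := by
  subst hn
  rw [dif_pos (by omega : 3*k+1 < 3*m)]
  refine osA_t m t P _ ⟨k, hk⟩ ?_
  rw [p1v1 m α β k hk]

lemma aae2 (m : ℕ) (t : Fin m → ℕ) (P : ℕ) (α β : Fin m ≃ Fin m) (n k : ℕ)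
    (hk : k < m) (hn : n = 3*k+2) :
    (if h : n < 3*m then osA m t P (p1 m α β ⟨n, h⟩) else 0) = 1 := by
  subst hn
  rw [dif_pos (by omega : 3*k+2 < 3*m)]
  apply osA_x
  rw [p1v2 m α β k hk]
  omega

lemma bbe0 (m : ℕ) (sX sY : Fin m → ℕ) (P : ℕ) (α β : Fin m ≃ Fin m) (n k : ℕ)
    (hk : k < m) (hn : n = 3*k) :
    (if h : n < 3*m then osB m sX sY P (p2 m α β ⟨n, h⟩) else 0) = sX (α ⟨k, hk⟩) + P := by
  subst hn
  rw [dif_pos (by omega : 3*k < 3*m)]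
  refine osB_x m sX sY P _ (α ⟨k, hk⟩) ?_
  rw [p2v0 m α β k hk]

lemma bbe1 (m : ℕ) (sX sY : Fin m → ℕ) (P : ℕ) (α β : Fin m ≃ Fin m) (n k : ℕ)
    (hk : k < m) (hn : n = 3*k+1) :
    (if h : n < 3*m then osB m sX sY P (p2 m α β ⟨n, h⟩) else 0) = sY (β ⟨k, hk⟩) + 2*P := by
  subst hn
  rw [dif_pos (by omega : 3*k+1 < 3*m)]
  refine osB_y m sX sY P _ (β ⟨k, hk⟩) ?_
  rw [p2v1 m α β k hk]

lemma bbe2 (m : ℕ) (sX sY : Fin m → ℕ) (P : ℕ) (α β : Fin m ≃ Fin m) (n k : ℕ)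
    (hk : k < m) (hn : n = 3*k+2) :
    (if h : n < 3*m then osB m sX sY P (p2 m α β ⟨n, h⟩) else 0) = 2 := by
  subst hn
  rw [dif_pos (by omega : 3*k+2 < 3*m)]
  apply osB_t
  rw [p2v2 m α β k hk]
  omega

/-! prefix sums -/

lemma S1a (m : ℕ) (t : Fin m → ℕ) (P : ℕ) (α β : Fin m ≃ Fin m) (i : ℕ) (hi : i ≤ m) :
    ∑ n ∈ Finset.range (3*i), (if h : n < 3*m then osA m t P (p1 m α β ⟨n, h⟩) else 0)
      = T m t P i := by
  induction i with
  | zero => simp [T]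
  | succ k ih =>
    have hk : k < m := by omega
    rw [show 3*(k+1) = (3*k+1+1)+1 by ring, Finset.sum_range_succ, Finset.sum_range_succ,
      Finset.sum_range_succ, ih (by omega),
      aae0 m t P α β (3*k) k hk rfl,
      aae1 m t P α β (3*k+1) k hk rfl,
      aae2 m t P α β (3*k+1+1) k hk (by omega)]
    unfold T
    rw [Finset.sum_range_succ, dif_pos hk]
    omega

lemma S1b (m : ℕ) (t : Fin m → ℕ) (P : ℕ) (α β : Fin m ≃ Fin m) (i : ℕ) (hi : i < m) :
    ∑ n ∈ Finset.range (3*i+1), (if h : n < 3*m then osA m t P (p1 m α β ⟨n, h⟩) else 0)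
      = T m t P i + 1 := by
  rw [Finset.sum_range_succ, S1a m t P α β i (le_of_lt hi), aae0 m t P α β (3*i) i hi rfl]

lemma S1c (m : ℕ) (t : Fin m → ℕ) (P : ℕ) (α β : Fin m ≃ Fin m) (i : ℕ) (hi : i < m) :
    ∑ n ∈ Finset.range (3*i+2), (if h : n < 3*m then osA m t P (p1 m α β ⟨n, h⟩) else 0)
      = T m t P i + 1 + (t ⟨i, hi⟩ + 3*P) := by
  rw [show 3*i+2 = (3*i+1)+1 by omega, Finset.sum_range_succ, S1b m t P α β i hi,
    aae1 m t P α β (3*i+1) i hi rfl]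

lemma S2a (m : ℕ) (sX sY t : Fin m → ℕ) (P : ℕ) (α β : Fin m ≃ Fin m)
    (hmatch : ∀ i, sX (α i) + sY (β i) = t i) (i : ℕ) (hi : i ≤ m) :
    ∑ n ∈ Finset.range (3*i), (if h : n < 3*m then osB m sX sY P (p2 m α β ⟨n, h⟩) else 0)
      = T m t P i := by
  induction i with
  | zero => simp [T]
  | succ k ih =>
    have hk : k < m := by omega
    rw [show 3*(k+1) = (3*k+1+1)+1 by ring, Finset.sum_range_succ, Finset.sum_range_succ,
      Finset.sum_range_succ, ih (by omega),
      bbe0 m sX sY P α β (3*k) k hk rfl,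
      bbe1 m sX sY P α β (3*k+1) k hk rfl,
      bbe2 m sX sY P α β (3*k+1+1) k hk (by omega)]
    unfold T
    rw [Finset.sum_range_succ, dif_pos hk]
    have := hmatch ⟨k, hk⟩
    omega

lemma S2b (m : ℕ) (sX sY t : Fin m → ℕ) (P : ℕ) (α β : Fin m ≃ Fin m)
    (hmatch : ∀ i, sX (α i) + sY (β i) = t i) (i : ℕ) (hi : i < m) :
    ∑ n ∈ Finset.range (3*i+1), (if h : n < 3*m then osB m sX sY P (p2 m α β ⟨n, h⟩) else 0)
      = T m t P i + (sX (α ⟨i, hi⟩) + P) := by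
  rw [Finset.sum_range_succ, S2a m sX sY t P α β hmatch i (le_of_lt hi),
    bbe0 m sX sY P α β (3*i) i hi rfl]

lemma S2c (m : ℕ) (sX sY t : Fin m → ℕ) (P : ℕ) (α β : Fin m ≃ Fin m)
    (hmatch : ∀ i, sX (α i) + sY (β i) = t i) (i : ℕ) (hi : i < m) :
    ∑ n ∈ Finset.range (3*i+2), (if h : n < 3*m then osB m sX sY P (p2 m α β ⟨n, h⟩) else 0)
      = T m t P i + (sX (α ⟨i, hi⟩) + P) + (sY (β ⟨i, hi⟩) + 2*P) := by
  rw [show 3*i+2 = (3*i+1)+1 by omega, Finset.sum_range_succ,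
    S2b m sX sY t P α β hmatch i hi, bbe1 m sX sY P α β (3*i+1) i hi rfl]

lemma Tm (m : ℕ) (t : Fin m → ℕ) (P : ℕ) :
    T m t P m = 2*m + 3*m*P + ∑ i, t i := by
  unfold T
  rw [Finset.sum_add_distrib, Finset.sum_add_distrib, Finset.sum_const, Finset.card_range]
  have h2 : ∑ k ∈ Finset.range m, (if h : k < m then t ⟨k, h⟩ else 0) = ∑ i, t i := by
    rw [← Fin.sum_univ_eq_sum_range (fun k => if h : k < m then t ⟨k, h⟩ else 0) m]
    exact Finset.sum_congr rfl (fun i _ => by simp)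
  rw [h2, Finset.sum_const, Finset.card_range, smul_eq_mul, smul_eq_mul]
  ring

/-! startTime as a range sum -/

lemma startTime_eq (N : ℕ) (c : Fin N → ℕ) (π : Fin N ≃ Fin N) (s : ℕ) (j : Fin N) :
    startTime N c π s j
      = s + ∑ n ∈ Finset.range ((π.symm j : Fin N) : ℕ),
          (if h : n < N then c (π ⟨n, h⟩) else 0) := by
  unfold startTime
  congr 1
  rw [Finset.sum_filter]
  have h1 : ∀ l : Fin N, (if l < π.symm j then c (π l) else 0)
      = (fun n => if h : n < N then
          (if n < ((π.symm j : Fin N) : ℕ) then c (π ⟨n, h⟩) else 0) else 0) ((l : Fin N) : ℕ) := by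
    intro l
    beta_reduce
    rw [dif_pos l.isLt]
    simp only [Fin.lt_def, Fin.eta]
  rw [Finset.sum_congr rfl (fun l _ => h1 l),
    Fin.sum_univ_eq_sum_range (fun n => if h : n < N then
      (if n < ((π.symm j : Fin N) : ℕ) then c (π ⟨n, h⟩) else 0) else 0) N]
  have hq : ((π.symm j : Fin N) : ℕ) ≤ N := le_of_lt (Fin.is_lt _)
  have hz : ∀ x ∈ Finset.range N, x ∉ Finset.range ((π.symm j : Fin N) : ℕ) →
      (fun n => if h : n < N then
        (if n < ((π.symm j : Fin N) : ℕ) then c (π ⟨n, h⟩) else 0) else 0) x = 0 := by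
    intro x hx hnx
    simp only [Finset.mem_range, not_lt] at hx hnx
    beta_reduce
    rw [dif_pos hx, if_neg (by omega)]
  rw [← Finset.sum_subset (Finset.range_subset_range.mpr hq) hz]
  refine Finset.sum_congr rfl (fun n hn => ?_)
  simp only [Finset.mem_range] at hn
  have hnN : n < N := lt_of_lt_of_le hn hq
  beta_reduce
  rw [dif_pos hnN, if_pos hn, dif_pos hnN]

end St17


/-- if the NMTS instance `(sX, sY, t)` has a solution, the constructed
two-machine open shop instance has a feasible no-idle/no-wait schedule with makespan
exactly `L + 1`. -/
theorem stmt_17 (m : ℕ) (hm : 1 ≤ m) (sX sY t : Fin m → ℕ)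
    (hsX : ∀ i, 0 < sX i) (hsY : ∀ i, 0 < sY i) (ht : ∀ i, 0 < t i)
    (hsum : ∑ i, t i = ∑ i, sX i + ∑ i, sY i)
    (P L : ℕ) (hP : P = ∑ i, t i + ∑ i, sX i + ∑ i, sY i)
    (hL : L = 2 * m + 3 * m * P + ∑ i, t i)
    (α β : Fin m ≃ Fin m) (hmatch : ∀ i, sX (α i) + sY (β i) = t i) :
    ∃ (π1 π2 : Fin (3 * m) ≃ Fin (3 * m)) (s1 s2 : ℕ),
      OSSchedule (3 * m) (osA m t P) (osB m sX sY P) π1 π2 s1 s2 ∧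
      max (s1 + ∑ j, osA m t P j) (s2 + ∑ j, osB m sX sY P j) = L + 1 := by
  refine ⟨St17.p1 m α β, St17.p2 m α β, 0, 1, ?_, ?_⟩
  · intro j
    by_cases hx : (j:ℕ) < m
    · -- x-job: M2 starts when M1 ends
      left
      rw [St17.startTime_eq, St17.startTime_eq, St17.q1x m α β j hx, St17.q2x m α β j hx,
        St17.S1a m t P α β _ (le_of_lt (Fin.is_lt _)),
        St17.S2a m sX sY t P α β hmatch _ (le_of_lt (Fin.is_lt _)),
        St17.osA_x m t P j (by omega)]
      omega
    · by_cases hy : (j:ℕ) < 2*m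
      · -- y-job: M1 starts when M2 ends
        right
        have hjm : (j:ℕ) - m < m := by omega
        rw [St17.startTime_eq, St17.startTime_eq, St17.q1y m α β j hx hy hjm,
          St17.q2y m α β j hx hy hjm,
          St17.S1c m t P α β _ (Fin.is_lt _),
          St17.S2b m sX sY t P α β hmatch _ (Fin.is_lt _),
          St17.osB_y m sX sY P j (β ⟨(↑(β.symm ⟨(j:ℕ) - m, hjm⟩) : ℕ), Fin.is_lt _⟩)
            (by simp only [Fin.eta, Equiv.apply_symm_apply, Fin.val_mk]; omega)]
        simp only [Fin.eta, Equiv.apply_symm_apply]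
        have := hmatch (β.symm ⟨(j:ℕ) - m, hjm⟩)
        rw [Equiv.apply_symm_apply] at this
        omega
      · -- t-job: M2 starts when M1 ends
        left
        have hj2 : (j:ℕ) - 2*m < m := by omega
        rw [St17.startTime_eq, St17.startTime_eq, St17.q1t m α β j hy, St17.q2t m α β j hy,
          St17.S1b m t P α β _ hj2,
          St17.S2c m sX sY t P α β hmatch _ hj2,
          St17.osA_t m t P j ⟨(j:ℕ) - 2*m, hj2⟩ (by simp only [Fin.val_mk]; omega)]
        have := hmatch ⟨(j:ℕ) - 2*m, hj2⟩
        omega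
  · have hA : ∑ j, osA m t P j = St17.T m t P m := by
      rw [← Equiv.sum_comp (St17.p1 m α β) (osA m t P), ← St17.S1a m t P α β m le_rfl,
        ← Fin.sum_univ_eq_sum_range
          (fun n => if h : n < 3*m then osA m t P (St17.p1 m α β ⟨n, h⟩) else 0) (3*m)]
      all_goals
        refine Finset.sum_congr rfl (fun p _ => ?_)
        beta_reduce
        rw [dif_pos p.isLt]
        try simp only [Fin.eta]
    have hB : ∑ j, osB m sX sY P j = St17.T m t P m := by
      rw [← Equiv.sum_comp (St17.p2 m α β) (osB m sX sY P),
        ← St17.S2a m sX sY t P α β hmatch m le_rfl,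
        ← Fin.sum_univ_eq_sum_range
          (fun n => if h : n < 3*m then osB m sX sY P (St17.p2 m α β ⟨n, h⟩) else 0) (3*m)]
      all_goals
        refine Finset.sum_congr rfl (fun p _ => ?_)
        beta_reduce
        rw [dif_pos p.isLt]
        try simp only [Fin.eta]
    rw [hA, hB, St17.Tm m t P, ← hL]
    omega
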